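/- arXiv:math-ph/0410005 — 4 statements merged into one kernel-verified Lean document; each statement's English description precedes it below -/
import Mathlib

section
/- Fix ε ∈ (0,1/10), κ > 0 and q > 0. There exist a constant c_q > 0 and N₀ ∈ ℕ (depending only on q, κ, ε) such that for every N ≥ N₀, every ℓ ∈ (0, N^{-κ}], every configuration x₁,…,x_N ∈ ℝ³, and every fixed index i: Σ_{j≠i} χ̃_{ij} F_{ij}^q ≤ c_q. -/
open MeasureTheory

noncomputable section

abbrev E3 := EuclideanSpace ℝ (Fin 3)

def e3 (α : Fin 3) : E3 := EuclideanSpace.single α 1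

/-- the exponential cutoff at scale ℓ: h(x) = exp(−√(|x|²+ℓ²)/ℓ) -/
def hcut (ℓ : ℝ) (x : E3) : ℝ := Real.exp (-(Real.sqrt (‖x‖ ^ 2 + ℓ ^ 2)) / ℓ)

/-- 𝒩_{ij} = Σ_{k≠i,j} [h(x_k−x_i) + h(x_k−x_j)] -/
def NNij (ℓ : ℝ) {N : ℕ} (x : Fin N → E3) (i j : Fin N) : ℝ :=
  ∑ k ∈ Finset.univ.filter (fun k => k ≠ i ∧ k ≠ j),
    (hcut ℓ (x k - x i) + hcut ℓ (x k - x j))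

/-- the triple cutoff F_{ij} = exp(−𝒩_{ij}/ℓ^ε) -/
def Fij (ℓ ε : ℝ) {N : ℕ} (x : Fin N → E3) (i j : Fin N) : ℝ :=
  Real.exp (-(NNij ℓ x i j) / ℓ ^ ε)

/-- |∇_{x_k} G| : the Euclidean norm of the gradient of G w.r.t. the variable x_k -/
def gradk {N : ℕ} (G : (Fin N → E3) → ℝ) (k : Fin N) (x : Fin N → E3) : ℝ :=
  Real.sqrt (∑ α, (fderiv ℝ G x (Pi.single k (e3 α))) ^ 2)

/-- |∇_{x_k}∇_{x_m} G| : the operator norm of the 3×3 matrix of mixed second partial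
derivatives of G in the variables x_k, x_m -/
def hessNorm {N : ℕ} (G : (Fin N → E3) → ℝ) (k m : Fin N) (x : Fin N → E3) : ℝ :=
  ‖Matrix.toEuclideanCLM (𝕜 := ℝ) (Matrix.of fun α β : Fin 3 =>
      fderiv ℝ (fun y => fderiv ℝ G y (Pi.single m (e3 β))) x (Pi.single k (e3 α)))‖

/- STATEMENT 6: summed no-overlap bound (Lemma B.1 / `lemma:noover`,
eq. (B.2)).  For fixed ε ∈ (0,1/10), κ > 0, q > 0 there are c_q > 0 and N₀
such that for all N ≥ N₀, all ℓ ∈ (0, N^{-κ}], all configurations and all i: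
  Σ_{j≠i} χ̃_{ij} F_{ij}^q ≤ c_q. -/
lemma aux_texp (a t : ℝ) (ha : 0 < a) (ht : 0 ≤ t) :
    t * Real.exp (-(a * t)) ≤ 1 / a := by
  have h1 : a * t ≤ Real.exp (a * t) := by
    have := Real.add_one_le_exp (a * t)
    nlinarith [mul_nonneg ha.le ht]
  have h2 : t ≤ Real.exp (a * t) / a := by
    rw [le_div_iff₀ ha]; linarith [h1]
  have h3 : Real.exp (-(a*t)) = (Real.exp (a*t))⁻¹ := Real.exp_neg _
  have hep := Real.exp_pos (a * t)
  calc t * Real.exp (-(a*t)) ≤ (Real.exp (a*t) / a) * Real.exp (-(a*t)) := by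
        apply mul_le_mul_of_nonneg_right h2 (Real.exp_pos _).le
    _ = 1 / a := by rw [h3]; field_simp

theorem no_overlap_sum (ε κ q : ℝ) (hε0 : 0 < ε) (hε1 : ε < 1/10)
    (hκ : 0 < κ) (hq : 0 < q) :
    ∃ (c : ℝ) (N₀ : ℕ), 0 < c ∧
      ∀ (N : ℕ), N₀ ≤ N → ∀ (ℓ : ℝ), 0 < ℓ → ℓ ≤ (N : ℝ) ^ (-κ) →
      ∀ (x : Fin N → E3) (i : Fin N),
        (∑ j ∈ Finset.univ.filter (fun j => j ≠ i),
            (if ‖x i - x j‖ ≤ ℓ then Fij ℓ ε x i j ^ q else 0)) ≤ c := by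
  set b : ℝ := Real.exp (-2) with hb_def
  have hb : 0 < b := Real.exp_pos _
  set a : ℝ := q * b with ha_def
  have ha : 0 < a := mul_pos hq hb
  refine ⟨1/a + 1, 1, by positivity, ?_⟩
  intro N hN ℓ hℓ hℓN x i
  have hN1 : (1:ℝ) ≤ (N:ℝ) := by exact_mod_cast hN
  have hℓ1 : ℓ ≤ 1 :=
    le_trans hℓN (Real.rpow_le_one_of_one_le_of_nonpos hN1 (by linarith))
  set S := Finset.univ.filter (fun j => j ≠ i ∧ ‖x i - x j‖ ≤ ℓ) with hS
  have hsum : (∑ j ∈ Finset.univ.filter (fun j => j ≠ i),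
      (if ‖x i - x j‖ ≤ ℓ then Fij ℓ ε x i j ^ q else 0))
      = ∑ j ∈ S, Fij ℓ ε x i j ^ q := by
    rw [hS, Finset.sum_filter, Finset.sum_filter]
    apply Finset.sum_congr rfl
    intro j _
    by_cases h1 : j ≠ i <;> by_cases h2 : ‖x i - x j‖ ≤ ℓ <;> simp [h1, h2]
  rw [hsum]
  set n := S.card with hn_def
  rcases Nat.eq_zero_or_pos n with h0 | hn1
  · have hSe : S = ∅ := Finset.card_eq_zero.mp h0
    rw [hSe, Finset.sum_empty]; positivity
  · have hn1R : (1:ℝ) ≤ (n:ℝ) := by exact_mod_cast hn1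
    have hpow : (0:ℝ) < ℓ ^ ε := Real.rpow_pos_of_pos hℓ ε
    have hpow1 : ℓ ^ ε ≤ 1 := Real.rpow_le_one hℓ.le hℓ1 hε0.le
    have key : ∀ j ∈ S, Fij ℓ ε x i j ^ q ≤ Real.exp (-(a * ((n:ℝ) - 1))) := by
      intro j hj
      have hjS := hj
      rw [hS, Finset.mem_filter] at hjS
      -- lower bound on NNij
      have hNN : b * ((n:ℝ) - 1) ≤ NNij ℓ x i j := by
        have hsub : S.erase j ⊆ Finset.univ.filter (fun k => k ≠ i ∧ k ≠ j) := by
          intro k hk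
          rw [Finset.mem_erase] at hk
          have hkS := hk.2
          rw [hS, Finset.mem_filter] at hkS
          exact Finset.mem_filter.mpr ⟨Finset.mem_univ _, hkS.2.1, hk.1⟩
        have hterm : ∀ k ∈ S.erase j, b ≤ hcut ℓ (x k - x i) + hcut ℓ (x k - x j) := by
          intro k hk
          rw [Finset.mem_erase] at hk
          have hkS := hk.2
          rw [hS, Finset.mem_filter] at hkS
          have hdist : ‖x k - x i‖ ≤ ℓ := by
            rw [norm_sub_rev]; exact hkS.2.2
          have hnn : (0:ℝ) ≤ ‖x k - x i‖ := norm_nonneg _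
          have hsq : ‖x k - x i‖ ^ 2 + ℓ ^ 2 ≤ (2 * ℓ) ^ 2 := by nlinarith
          have hsqrt : Real.sqrt (‖x k - x i‖ ^ 2 + ℓ ^ 2) ≤ 2 * ℓ := by
            have := Real.sqrt_le_sqrt hsq
            rwa [Real.sqrt_sq (by linarith : (0:ℝ) ≤ 2 * ℓ)] at this
          have h1 : b ≤ hcut ℓ (x k - x i) := by
            rw [hcut, hb_def]
            apply Real.exp_le_exp.mpr
            have hd : Real.sqrt (‖x k - x i‖ ^ 2 + ℓ ^ 2) / ℓ ≤ 2 := by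
              rw [div_le_iff₀ hℓ]; linarith
            rw [neg_div]; linarith
          have h2 : (0:ℝ) ≤ hcut ℓ (x k - x j) := (Real.exp_pos _).le
          linarith
        have hmono : ∑ k ∈ S.erase j, (hcut ℓ (x k - x i) + hcut ℓ (x k - x j))
            ≤ NNij ℓ x i j := by
          rw [NNij]
          apply Finset.sum_le_sum_of_subset_of_nonneg hsub
          intro k _ _
          exact add_nonneg (Real.exp_pos _).le (Real.exp_pos _).le
        have hcard : (S.erase j).card = n - 1 := by
          rw [Finset.card_erase_of_mem hj, hn_def]
        have hlow : (S.erase j).card • b ≤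
            ∑ k ∈ S.erase j, (hcut ℓ (x k - x i) + hcut ℓ (x k - x j)) :=
          Finset.card_nsmul_le_sum _ _ _ hterm
        have hcast : ((S.erase j).card : ℝ) = (n:ℝ) - 1 := by
          rw [hcard, Nat.cast_sub hn1, Nat.cast_one]
        rw [nsmul_eq_mul, hcast] at hlow
        linarith [hmono, hlow]
      have hNNnn : (0:ℝ) ≤ NNij ℓ x i j := le_trans (by nlinarith) hNN
      have hdiv : b * ((n:ℝ) - 1) ≤ NNij ℓ x i j / ℓ ^ ε := by
        rw [le_div_iff₀ hpow]
        calc b * ((n:ℝ) - 1) * ℓ ^ ε ≤ b * ((n:ℝ) - 1) * 1 := by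
              apply mul_le_mul_of_nonneg_left hpow1 (by nlinarith)
          _ = b * ((n:ℝ) - 1) := mul_one _
          _ ≤ NNij ℓ x i j := hNN
      rw [Fij, ← Real.exp_mul]
      apply Real.exp_le_exp.mpr
      have : -NNij ℓ x i j / ℓ ^ ε * q = -(q * (NNij ℓ x i j / ℓ ^ ε)) := by ring
      rw [this]
      have : a * ((n:ℝ) - 1) ≤ q * (NNij ℓ x i j / ℓ ^ ε) := by
        rw [ha_def]
        have := mul_le_mul_of_nonneg_left hdiv hq.le
        linarith [this]
      linarith
    calc ∑ j ∈ S, Fij ℓ ε x i j ^ q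
        ≤ ∑ _j ∈ S, Real.exp (-(a * ((n:ℝ) - 1))) := Finset.sum_le_sum key
      _ = (n:ℝ) * Real.exp (-(a * ((n:ℝ) - 1))) := by
          rw [Finset.sum_const, nsmul_eq_mul, hn_def]
      _ ≤ 1/a + 1 := by
          set t : ℝ := (n:ℝ) - 1 with ht_def
          have ht : 0 ≤ t := by rw [ht_def]; linarith
          have h1 : t * Real.exp (-(a*t)) ≤ 1/a := aux_texp a t ha ht
          have h2 : Real.exp (-(a*t)) ≤ 1 := by
            rw [Real.exp_le_one_iff]; nlinarith
          have : (n:ℝ) = t + 1 := by rw [ht_def]; ring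
          rw [this]
          nlinarith [Real.exp_pos (-(a*t))]
end
end

section
/- Fix ε ∈ (0,1/10) and q > 0. There exists a constant c_q > 0, depending only on q, such that for every ℓ ∈ (0,1), every N ≥ 3, every configuration x₁,…,x_N ∈ ℝ³, and all indices i ≠ j: Σ_{k=1}^N |∇_{x_k} F_{ij}^q| ≤ c_q ℓ^{-1} F_{ij}^{q/2}, where F_{ij}^q is viewed as a smooth function of (x₁,…,x_N) ∈ ℝ^{3N} and ∇_{x_k} denotes the gradient with respect to x_k. -/
open MeasureTheory

noncomputable section

/-! Write `F_{ij}^q = exp (-s)` with `s = q 𝒩_{ij} / ℓ^ε`, so that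
`∇_{x_k} F_{ij}^q = -(q / ℓ^ε) F_{ij}^q ∇_{x_k} 𝒩_{ij}`. Since `|∇h(y)| ≤ h(y) / ℓ` and each summand
`h(x_m - x_i)` of `𝒩_{ij}` depends on the two positions `x_m, x_i` only, `Σ_k |∇_{x_k} 𝒩_{ij}| ≤ 2 𝒩_{ij} / ℓ`.
Hence `Σ_k |∇_{x_k} F_{ij}^q| ≤ 2 ℓ⁻¹ s e^{-s} ≤ 4 ℓ⁻¹ e^{-s/2} = 4 ℓ⁻¹ F_{ij}^{q/2}`. -/

open ContinuousLinearMap InnerProductSpace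

theorem sqrt_sum_sq_apply_single_eq_norm {ι : Type*} [Fintype ι] [DecidableEq ι]
    (L : EuclideanSpace ℝ ι →L[ℝ] ℝ) :
    √(∑ α, L (EuclideanSpace.single α 1) ^ 2) = ‖L‖ := by
  obtain ⟨v, rfl⟩ := (toDual ℝ (EuclideanSpace ℝ ι)).surjective L
  simp [EuclideanSpace.norm_eq, EuclideanSpace.inner_single_right]

section InnerProductSpace

variable {E : Type*} [NormedAddCommGroup E] [InnerProductSpace ℝ E] {c : ℝ}

theorem hasFDerivAt_sqrt_norm_sq_add (hc : 0 < c) (y : E) :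
    HasFDerivAt (fun y : E => √(‖y‖ ^ 2 + c)) ((√(‖y‖ ^ 2 + c))⁻¹ • innerSL ℝ y) y := by
  refine (((hasFDerivAt_id y).norm_sq.add_const c).sqrt (by positivity)).congr_fderiv ?_
  ext w
  simp
  field_simp

theorem norm_smul_innerSL_le (hc : 0 ≤ c) (y : E) :
    ‖(√(‖y‖ ^ 2 + c))⁻¹ • innerSL ℝ y‖ ≤ 1 := by
  rw [norm_smul, innerSL_apply_norm, norm_inv, Real.norm_of_nonneg (Real.sqrt_nonneg _)]
  refine inv_mul_le_one_of_le₀ ?_ (Real.sqrt_nonneg _)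
  exact Real.le_sqrt_of_sq_le (by linarith)

end InnerProductSpace

theorem mul_exp_neg_le_two_mul_exp_neg_half (s : ℝ) :
    s * Real.exp (-s) ≤ 2 * Real.exp (-(s / 2)) := by
  have h : s / 2 * Real.exp (-(s / 2)) ≤ 1 := by
    rw [Real.exp_neg, ← div_eq_mul_inv, div_le_one (Real.exp_pos _)]
    linarith [Real.add_one_le_exp (s / 2)]
  have hsplit : Real.exp (-s) = Real.exp (-(s / 2)) * Real.exp (-(s / 2)) := by
    rw [← Real.exp_add]; ring_nf
  calc s * Real.exp (-s) = 2 * (s / 2 * Real.exp (-(s / 2))) * Real.exp (-(s / 2)) := by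
        rw [hsplit]; ring
    _ ≤ 2 * 1 * Real.exp (-(s / 2)) := by gcongr
    _ = 2 * Real.exp (-(s / 2)) := by ring

section Configuration

variable {ι : Type*} [Fintype ι]
  {E F : Type*} [NormedAddCommGroup E] [NormedSpace ℝ E] [NormedAddCommGroup F] [NormedSpace ℝ F]

local notation "pr" k:max => ContinuousLinearMap.proj (R := ℝ) (φ := fun _ : ι => E) k

theorem hasFDerivAt_apply_sub {g : E → F} {x : ι → E} {m i : ι}
    (hg : DifferentiableAt ℝ g (x m - x i)) :
    HasFDerivAt (fun y : ι → E => g (y m - y i)) ((fderiv ℝ g (x m - x i)).comp (pr m - pr i)) x :=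
  hg.hasFDerivAt.comp x (pr m - pr i).hasFDerivAt

variable [DecidableEq ι]

local notation "slot" k:max => ContinuousLinearMap.single ℝ (fun _ : ι => E) k

theorem sum_norm_proj_comp_single_le (m : ι) :
    ∑ k, ‖(pr m).comp (slot k)‖ ≤ 1 := by
  rw [Finset.sum_eq_single m]
  · rw [show (pr m).comp (slot m) = ContinuousLinearMap.id ℝ E by ext; simp]
    exact norm_id_le
  · intro k _ hkm
    rw [show (pr m).comp (slot k) = 0 by ext; simp [Pi.single_eq_of_ne' hkm], norm_zero]
  · simp

theorem sum_norm_comp_sub_proj_comp_single_le (L : E →L[ℝ] F) (m i : ι) :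
    ∑ k, ‖(L.comp (pr m - pr i)).comp (slot k)‖ ≤ 2 * ‖L‖ := by
  calc ∑ k, ‖(L.comp (pr m - pr i)).comp (slot k)‖
      ≤ ∑ k, ‖L‖ * (‖(pr m).comp (slot k)‖ + ‖(pr i).comp (slot k)‖) := by
        gcongr with k
        rw [comp_assoc, sub_comp]
        exact (opNorm_comp_le _ _).trans (by gcongr; exact norm_sub_le _ _)
    _ ≤ ‖L‖ * (1 + 1) := by
        rw [← Finset.mul_sum, Finset.sum_add_distrib]
        gcongr <;> exact sum_norm_proj_comp_single_le _
    _ = 2 * ‖L‖ := by ring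

theorem sum_norm_add_comp_single_le (L₁ L₂ : (ι → E) →L[ℝ] F) :
    ∑ k, ‖(L₁ + L₂).comp (slot k)‖ ≤ ∑ k, ‖L₁.comp (slot k)‖ + ∑ k, ‖L₂.comp (slot k)‖ := by
  rw [← Finset.sum_add_distrib]
  gcongr with k
  rw [add_comp]
  exact norm_add_le _ _

theorem sum_norm_finsetSum_comp_single_le {α : Type*} (s : Finset α) (L : α → (ι → E) →L[ℝ] F) :
    ∑ k, ‖(∑ m ∈ s, L m).comp (slot k)‖ ≤ ∑ m ∈ s, ∑ k, ‖(L m).comp (slot k)‖ := by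
  rw [Finset.sum_comm]
  gcongr with k
  rw [finsetSum_comp]
  exact norm_sum_le _ _

theorem sum_norm_fderiv_exp_mul_comp_single {f : (ι → E) → ℝ} {x : ι → E}
    (hf : DifferentiableAt ℝ f x) (a : ℝ) :
    ∑ k, ‖(fderiv ℝ (fun y => Real.exp (a * f y)) x).comp (slot k)‖ =
      Real.exp (a * f x) * |a| * ∑ k, ‖(fderiv ℝ f x).comp (slot k)‖ := by
  rw [((hf.hasFDerivAt.const_mul a).exp).fderiv, Finset.mul_sum]
  simp only [smul_comp, norm_smul, Real.norm_eq_abs, abs_of_pos (Real.exp_pos _), mul_assoc]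

end Configuration

theorem hasFDerivAt_hcut {ℓ : ℝ} (hℓ : 0 < ℓ) (y : E3) :
    HasFDerivAt (hcut ℓ) ((-(hcut ℓ y / ℓ)) • (√(‖y‖ ^ 2 + ℓ ^ 2))⁻¹ • innerSL ℝ y) y := by
  have h := ((hasFDerivAt_sqrt_norm_sq_add (by positivity : 0 < ℓ ^ 2) y).neg.mul_const ℓ⁻¹).exp
  have hfun : hcut ℓ = fun y => Real.exp (-√(‖y‖ ^ 2 + ℓ ^ 2) * ℓ⁻¹) := by
    funext; rw [hcut, div_eq_mul_inv]
  rw [hfun]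
  refine h.congr_fderiv ?_
  ext
  simp [div_eq_mul_inv]
  ring

theorem norm_fderiv_hcut_le {ℓ : ℝ} (hℓ : 0 < ℓ) (y : E3) :
    ‖fderiv ℝ (hcut ℓ) y‖ ≤ hcut ℓ y / ℓ := by
  have hpos : 0 < hcut ℓ y := Real.exp_pos _
  rw [(hasFDerivAt_hcut hℓ y).fderiv, norm_smul, norm_neg, Real.norm_of_nonneg (by positivity)]
  exact mul_le_of_le_one_right (by positivity) (norm_smul_innerSL_le (by positivity) y)

theorem gradk_eq_norm_fderiv_comp_single {N : ℕ} (G : (Fin N → E3) → ℝ) (k : Fin N)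
    (x : Fin N → E3) :
    gradk G k x = ‖(fderiv ℝ G x).comp (single ℝ (fun _ : Fin N => E3) k)‖ := by
  rw [gradk, ← sqrt_sum_sq_apply_single_eq_norm]
  rfl

theorem hasFDerivAt_NNij {ℓ : ℝ} (hℓ : 0 < ℓ) {N : ℕ} (x : Fin N → E3) (i j : Fin N) :
    HasFDerivAt (fun y => NNij ℓ y i j)
      (∑ m ∈ Finset.univ.filter (fun k => k ≠ i ∧ k ≠ j),
        ((fderiv ℝ (hcut ℓ) (x m - x i)).comp (proj (R := ℝ) (φ := fun _ => E3) m - proj i) +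
          (fderiv ℝ (hcut ℓ) (x m - x j)).comp (proj (R := ℝ) (φ := fun _ => E3) m - proj j))) x := by
  have hd : ∀ y, DifferentiableAt ℝ (hcut ℓ) y := fun y => (hasFDerivAt_hcut hℓ y).differentiableAt
  exact HasFDerivAt.fun_sum fun m _ =>
    (hasFDerivAt_apply_sub (hd _)).add (hasFDerivAt_apply_sub (hd _))

theorem sum_norm_fderiv_NNij_comp_single_le {ℓ : ℝ} (hℓ : 0 < ℓ) {N : ℕ} (x : Fin N → E3)
    (i j : Fin N) :
    ∑ k, ‖(fderiv ℝ (fun y => NNij ℓ y i j) x).comp (single ℝ (fun _ : Fin N => E3) k)‖ ≤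
      2 * NNij ℓ x i j / ℓ := by
  rw [(hasFDerivAt_NNij hℓ x i j).fderiv]
  refine (sum_norm_finsetSum_comp_single_le _ _).trans ?_
  rw [NNij, Finset.mul_sum, Finset.sum_div]
  gcongr with m
  refine (sum_norm_add_comp_single_le _ _).trans ?_
  calc _ ≤ 2 * ‖fderiv ℝ (hcut ℓ) (x m - x i)‖ + 2 * ‖fderiv ℝ (hcut ℓ) (x m - x j)‖ := by
        gcongr <;> exact sum_norm_comp_sub_proj_comp_single_le _ _ _
    _ ≤ 2 * (hcut ℓ (x m - x i) / ℓ) + 2 * (hcut ℓ (x m - x j) / ℓ) := by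
        gcongr <;> exact norm_fderiv_hcut_le hℓ _
    _ = _ := by ring

theorem Fij_rpow (ℓ ε q : ℝ) {N : ℕ} (x : Fin N → E3) (i j : Fin N) :
    Fij ℓ ε x i j ^ q = Real.exp (-(q / ℓ ^ ε) * NNij ℓ x i j) := by
  rw [Fij, ← Real.exp_mul]
  ring_nf

theorem gradient_sum_bound (q : ℝ) (hq : 0 < q) :
    ∃ c : ℝ, 0 < c ∧
      ∀ (ε : ℝ), 0 < ε → ε < 1/10 →
      ∀ (ℓ : ℝ), 0 < ℓ → ℓ < 1 →
      ∀ (N : ℕ), 3 ≤ N →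
      ∀ (x : Fin N → E3) (i j : Fin N), i ≠ j →
        (∑ k, gradk (fun y => Fij ℓ ε y i j ^ q) k x) ≤
          c * ℓ⁻¹ * Fij ℓ ε x i j ^ (q/2) := by
  refine ⟨4, by norm_num, fun ε _ _ ℓ hℓ _ N _ x i j _ => ?_⟩
  obtain ⟨s, hs⟩ : ∃ s, q / ℓ ^ ε * NNij ℓ x i j = s := ⟨_, rfl⟩
  have hG : (fun y => Fij ℓ ε y i j ^ q) = fun y => Real.exp (-(q / ℓ ^ ε) * NNij ℓ y i j) :=
    funext fun y => Fij_rpow ℓ ε q y i j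
  calc ∑ k, gradk (fun y => Fij ℓ ε y i j ^ q) k x
      = Real.exp (-s) * (q / ℓ ^ ε) *
          ∑ k, ‖(fderiv ℝ (fun y => NNij ℓ y i j) x).comp (single ℝ (fun _ : Fin N => E3) k)‖ := by
        simp only [gradk_eq_norm_fderiv_comp_single, hG]
        rw [sum_norm_fderiv_exp_mul_comp_single (hasFDerivAt_NNij hℓ x i j).differentiableAt,
          abs_neg, abs_of_pos (by positivity), neg_mul, hs]
    _ ≤ Real.exp (-s) * (q / ℓ ^ ε) * (2 * NNij ℓ x i j / ℓ) := by
        gcongr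
        exact sum_norm_fderiv_NNij_comp_single_le hℓ x i j
    _ = 2 * ℓ⁻¹ * (s * Real.exp (-s)) := by
        rw [← hs]
        ring
    _ ≤ 2 * ℓ⁻¹ * (2 * Real.exp (-(s / 2))) :=
        mul_le_mul_of_nonneg_left (mul_exp_neg_le_two_mul_exp_neg_half s) (by positivity)
    _ = 4 * ℓ⁻¹ * Fij ℓ ε x i j ^ (q / 2) := by
        rw [Fij_rpow, ← hs]
        ring_nf
end
end

section
/- Fix ε ∈ (0,1/10), q > 0, K > 0, and a smooth function θ : ℝ → [0,1] with θ(s) = 1 for s ≤ 1 and θ(s) = 0 for s ≥ 2; for indices a,b set θ_{ab} = θ(|x_a − x_b|/(Kℓ|log ℓ|)). Then there exist constants c_q > 0 (depending only on q) and C > 0 (depending only on q and K) such that for every ℓ ∈ (0,1/2), every N ≥ 3, every configuration x₁,…,x_N ∈ ℝ³, all distinct i, j, and every k ∉ {i,j}: |∇_{x_k} F_{ij}^q| ≤ c_q ℓ^{-1}(θ_{ik} + θ_{jk}) F_{ij}^{q/2} + C ℓ^{K−1−ε}. -/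
open MeasureTheory

noncomputable section

lemma sq_add_sq_pos {ℓ : ℝ} (hℓ : 0 < ℓ) (x : E3) : 0 < ‖x‖ ^ 2 + ℓ ^ 2 :=
  add_pos_of_nonneg_of_pos (by positivity) (by positivity)

lemma norm_le_sqrt {ℓ : ℝ} (hℓ : 0 < ℓ) (y : E3) : ‖y‖ ≤ Real.sqrt (‖y‖ ^ 2 + ℓ ^ 2) := by
  exact (Real.le_sqrt (norm_nonneg y) (by positivity)).2 (by nlinarith [sq_nonneg ℓ])

def Dh (ℓ : ℝ) (x : E3) : E3 →L[ℝ] ℝ :=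
  (-(hcut ℓ x) / (ℓ * Real.sqrt (‖x‖ ^ 2 + ℓ ^ 2))) • (innerSL ℝ x)

lemma hasFDerivAt_hcut_s8 {ℓ : ℝ} (hℓ : 0 < ℓ) (x : E3) :
    HasFDerivAt (hcut ℓ) (Dh ℓ x) x := by
  have hpos := sq_add_sq_pos hℓ x
  have hsq : 0 < Real.sqrt (‖x‖ ^ 2 + ℓ ^ 2) := Real.sqrt_pos.2 hpos
  have h1 : HasFDerivAt (fun y : E3 => ‖y‖ ^ 2 + ℓ ^ 2)
      (((fderivInnerCLM ℝ (x, x)).comp ((ContinuousLinearMap.id ℝ E3).prod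
        (ContinuousLinearMap.id ℝ E3)))) x := by
    have h := ((hasFDerivAt_id x).inner ℝ (hasFDerivAt_id x)).add_const (ℓ ^ 2)
    simpa only [← real_inner_self_eq_norm_sq, id_eq] using h
  have h2 := (Real.hasDerivAt_sqrt (ne_of_gt hpos)).comp_hasFDerivAt x h1
  have h3 := (h2.const_mul ℓ⁻¹).fun_neg
  have h4 := h3.exp
  have hfun : (fun y : E3 => Real.exp (-(ℓ⁻¹ * ((fun x => Real.sqrt x) ∘
      fun y : E3 => ‖y‖ ^ 2 + ℓ ^ 2) y))) = hcut ℓ := by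
    funext y
    simp only [hcut, Function.comp]
    ring_nf
  rw [hfun] at h4
  refine h4.congr_fderiv (Eq.symm ?_)
  ext w
  simp only [Dh, ContinuousLinearMap.smul_apply, innerSL_apply_apply, ContinuousLinearMap.coe_smul',
    Pi.smul_apply, ContinuousLinearMap.neg_apply, ContinuousLinearMap.coe_comp',
    Function.comp_apply, ContinuousLinearMap.prod_apply, ContinuousLinearMap.coe_id', id_eq,
    fderivInnerCLM_apply, smul_eq_mul, hcut]
  rw [real_inner_comm w x]
  field_simp
  ring

section main
variable {ℓ ε : ℝ} {N : ℕ} (x : Fin N → E3) (i j k : Fin N)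

def prj (a : Fin N) : (Fin N → E3) →L[ℝ] E3 := ContinuousLinearMap.proj a

def LN (ℓ : ℝ) (x : Fin N → E3) (i j : Fin N) : (Fin N → E3) →L[ℝ] ℝ :=
  ∑ m ∈ Finset.univ.filter (fun m => m ≠ i ∧ m ≠ j),
    ((Dh ℓ (x m - x i)).comp (prj m - prj i) + (Dh ℓ (x m - x j)).comp (prj m - prj j))

lemma hasFDerivAt_NN (hℓ : 0 < ℓ) :
    HasFDerivAt (fun y => NNij ℓ y i j) (LN ℓ x i j) x := by
  apply HasFDerivAt.fun_sum
  intro m _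
  exact ((hasFDerivAt_hcut_s8 hℓ (x m - x i)).comp x ((prj m - prj i).hasFDerivAt)).add
    ((hasFDerivAt_hcut_s8 hℓ (x m - x j)).comp x ((prj m - prj j).hasFDerivAt))

lemma hasFDerivAt_Fq (hℓ : 0 < ℓ) (q : ℝ) :
    HasFDerivAt (fun y => Fij ℓ ε y i j ^ q)
      ((Fij ℓ ε x i j ^ q * (q * (-(ℓ ^ ε)⁻¹))) • LN ℓ x i j) x := by
  have hN := hasFDerivAt_NN x i j hℓ
  have hf := ((hN.const_mul (-(ℓ ^ ε)⁻¹)).mul_const q).exp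
  have hfun : (fun y => Real.exp (-(ℓ ^ ε)⁻¹ * NNij ℓ y i j * q)) =
      (fun y => Fij ℓ ε y i j ^ q) := by
    funext y
    rw [Fij, ← Real.exp_mul]
    ring_nf
  rw [hfun] at hf
  have harg : -(ℓ ^ ε)⁻¹ * NNij ℓ x i j * q = -(NNij ℓ x i j) / ℓ ^ ε * q := by ring
  rw [harg, Real.exp_mul, ← Fij] at hf
  refine hf.congr_fderiv (Eq.symm ?_)
  rw [Fij]
  module
end main

section eval
variable {ℓ ε : ℝ} {N : ℕ} (x : Fin N → E3) (i j k : Fin N)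

lemma LN_apply (hki : k ≠ i) (hkj : k ≠ j) (v : E3) :
    LN ℓ x i j (Pi.single k v) = Dh ℓ (x k - x i) v + Dh ℓ (x k - x j) v := by
  rw [LN, ContinuousLinearMap.sum_apply]
  rw [Finset.sum_eq_single_of_mem k (by simp [hki, hkj])]
  · simp [prj, Pi.single_eq_of_ne hki.symm, Pi.single_eq_of_ne hkj.symm]
  · intro m _ hmk
    simp [prj, Pi.single_eq_of_ne hmk, Pi.single_eq_of_ne hki.symm, Pi.single_eq_of_ne hkj.symm]
end eval

section bounds
variable {ℓ ε : ℝ} {N : ℕ}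

lemma hcut_pos (hℓ : 0 < ℓ) (y : E3) : 0 < hcut ℓ y := Real.exp_pos _

lemma sqrt_sum_sq_Dh (hℓ : 0 < ℓ) (y : E3) :
    Real.sqrt (∑ α, (Dh ℓ y (e3 α)) ^ 2) ≤ hcut ℓ y / ℓ := by
  have hsq : 0 < Real.sqrt (‖y‖ ^ 2 + ℓ ^ 2) := Real.sqrt_pos.2 (sq_add_sq_pos hℓ y)
  have happ : ∀ α, Dh ℓ y (e3 α) = (-(hcut ℓ y) / (ℓ * Real.sqrt (‖y‖ ^ 2 + ℓ ^ 2))) * y α := by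
    intro α
    simp [Dh, e3, EuclideanSpace.inner_single_right]
  set c := -(hcut ℓ y) / (ℓ * Real.sqrt (‖y‖ ^ 2 + ℓ ^ 2)) with hc
  have : ∑ α, (Dh ℓ y (e3 α)) ^ 2 = c ^ 2 * ∑ α, (y α) ^ 2 := by
    rw [Finset.mul_sum]; exact Finset.sum_congr rfl fun α _ => by rw [happ α]; ring
  rw [this]
  have hnorm : ∑ α, (y α) ^ 2 = ‖y‖ ^ 2 := by
    rw [EuclideanSpace.norm_eq]
    rw [Real.sq_sqrt (by positivity)]
    simp [sq_abs]
  rw [hnorm, Real.sqrt_mul (sq_nonneg c), Real.sqrt_sq_eq_abs, Real.sqrt_sq_eq_abs, abs_norm]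
  have hcabs : |c| = hcut ℓ y / (ℓ * Real.sqrt (‖y‖ ^ 2 + ℓ ^ 2)) := by
    rw [hc, abs_div, abs_neg, abs_of_pos (hcut_pos hℓ y), abs_of_pos (by positivity)]
  rw [hcabs]
  rw [div_mul_eq_mul_div, div_le_div_iff₀ (by positivity) hℓ]
  nlinarith [mul_le_mul_of_nonneg_left (norm_le_sqrt hℓ y) (le_of_lt (mul_pos (hcut_pos hℓ y) hℓ))]
end bounds


lemma sqrt_sum_triangle (a b : Fin 3 → ℝ) :
    Real.sqrt (∑ α, (a α + b α) ^ 2) ≤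
      Real.sqrt (∑ α, (a α) ^ 2) + Real.sqrt (∑ α, (b α) ^ 2) := by
  have h := norm_add_le (E := EuclideanSpace ℝ (Fin 3))
    ((WithLp.equiv 2 _).symm a) ((WithLp.equiv 2 _).symm b)
  simpa [EuclideanSpace.norm_eq, sq_abs, ← WithLp.toLp_add] using h

lemma sqrt_sum_mul (c : ℝ) (t : Fin 3 → ℝ) :
    Real.sqrt (∑ α, (c * t α) ^ 2) = |c| * Real.sqrt (∑ α, (t α) ^ 2) := by
  rw [show ∑ α, (c * t α) ^ 2 = c ^ 2 * ∑ α, (t α) ^ 2 by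
    rw [Finset.mul_sum]; exact Finset.sum_congr rfl fun α _ => by ring]
  rw [Real.sqrt_mul (sq_nonneg c), Real.sqrt_sq_eq_abs]

section gradbound
variable {ℓ ε q : ℝ} {N : ℕ} (x : Fin N → E3) (i j k : Fin N)

lemma gradk_le_main (hℓ : 0 < ℓ) (hq : 0 ≤ q) (hki : k ≠ i) (hkj : k ≠ j) :
    gradk (fun y => Fij ℓ ε y i j ^ q) k x ≤
      Fij ℓ ε x i j ^ q * q * (ℓ ^ ε)⁻¹ * (hcut ℓ (x k - x i)) * ℓ⁻¹
      + Fij ℓ ε x i j ^ q * q * (ℓ ^ ε)⁻¹ * (hcut ℓ (x k - x j)) * ℓ⁻¹ := by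
  have hG := hasFDerivAt_Fq x i j (ε := ε) hℓ q
  have hLA : ∀ α, LN ℓ x i j (Pi.single k (e3 α)) =
      Dh ℓ (x k - x i) (e3 α) + Dh ℓ (x k - x j) (e3 α) :=
    fun α => LN_apply x i j k hki hkj (e3 α)
  rw [gradk, hG.fderiv]
  simp only [ContinuousLinearMap.smul_apply, smul_eq_mul, hLA]
  rw [sqrt_sum_mul]
  have hA : |Fij ℓ ε x i j ^ q * (q * -(ℓ ^ ε)⁻¹)| =
      Fij ℓ ε x i j ^ q * q * (ℓ ^ ε)⁻¹ := by
    have hF : (0:ℝ) ≤ Fij ℓ ε x i j ^ q := Real.rpow_nonneg (le_of_lt (Real.exp_pos _)) q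
    have hεp : (0:ℝ) ≤ (ℓ ^ ε)⁻¹ := by positivity
    rw [abs_of_nonpos (by nlinarith [mul_nonneg (mul_nonneg hF hq) hεp])]
    ring
  rw [hA]
  have tri := sqrt_sum_triangle (fun α => Dh ℓ (x k - x i) (e3 α))
    (fun α => Dh ℓ (x k - x j) (e3 α))
  have b1 := sqrt_sum_sq_Dh hℓ (x k - x i)
  have b2 := sqrt_sum_sq_Dh hℓ (x k - x j)
  have hA0 : (0:ℝ) ≤ Fij ℓ ε x i j ^ q * q * (ℓ ^ ε)⁻¹ := by
    have hF : (0:ℝ) ≤ Fij ℓ ε x i j ^ q := Real.rpow_nonneg (le_of_lt (Real.exp_pos _)) q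
    positivity
  calc Fij ℓ ε x i j ^ q * q * (ℓ ^ ε)⁻¹ *
        Real.sqrt (∑ α, (Dh ℓ (x k - x i) (e3 α) + Dh ℓ (x k - x j) (e3 α)) ^ 2)
      ≤ Fij ℓ ε x i j ^ q * q * (ℓ ^ ε)⁻¹ *
        (hcut ℓ (x k - x i) / ℓ + hcut ℓ (x k - x j) / ℓ) := by
        apply mul_le_mul_of_nonneg_left _ hA0
        exact le_trans tri (add_le_add b1 b2)
    _ = Fij ℓ ε x i j ^ q * q * (ℓ ^ ε)⁻¹ * (hcut ℓ (x k - x i)) * ℓ⁻¹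
      + Fij ℓ ε x i j ^ q * q * (ℓ ^ ε)⁻¹ * (hcut ℓ (x k - x j)) * ℓ⁻¹ := by ring
end gradbound

lemma NNij_nonneg (ℓ : ℝ) {N : ℕ} (x : Fin N → E3) (i j : Fin N) : 0 ≤ NNij ℓ x i j :=
  Finset.sum_nonneg fun m _ => add_nonneg (Real.exp_pos _).le (Real.exp_pos _).le

lemma key_est {ℓ ε q K : ℝ} {N : ℕ} (x : Fin N → E3) (i j k : Fin N)
    (hq : 0 < q) (hK : 0 < K) (hε : 0 < ε) (hℓ : 0 < ℓ) (hℓ2 : ℓ < 1/2)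
    (θ : ℝ → ℝ) (hθ01 : ∀ s, θ s ∈ Set.Icc (0:ℝ) 1) (hθ1 : ∀ s, s ≤ 1 → θ s = 1)
    (z : E3) (hzN : hcut ℓ (x k - z) ≤ NNij ℓ x i j) :
    Fij ℓ ε x i j ^ q * q * (ℓ ^ ε)⁻¹ * hcut ℓ (x k - z) * ℓ⁻¹ ≤
      2 * ℓ⁻¹ * θ (‖z - x k‖ / (K * ℓ * |Real.log ℓ|)) * Fij ℓ ε x i j ^ (q/2)
        + q * ℓ ^ (K - 1 - ε) := by
  have hlogneg : Real.log ℓ < 0 := Real.log_neg hℓ (by linarith)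
  have hlog : 0 < |Real.log ℓ| := abs_pos.2 (ne_of_lt hlogneg)
  have hF : 0 < Fij ℓ ε x i j := Real.exp_pos _
  have hεp : (0:ℝ) < ℓ ^ ε := Real.rpow_pos_of_pos hℓ ε
  have hNN0 : 0 ≤ NNij ℓ x i j := NNij_nonneg ℓ x i j
  have hFle : Fij ℓ ε x i j ≤ 1 := by
    rw [Fij]
    apply Real.exp_le_one_iff.2
    apply div_nonpos_of_nonpos_of_nonneg (by linarith) hεp.le
  have hh0 : 0 < hcut ℓ (x k - z) := Real.exp_pos _
  have hFh0 : 0 ≤ Fij ℓ ε x i j ^ (q/2) := Real.rpow_nonneg hF.le _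
  have hsplit : Fij ℓ ε x i j ^ q = Fij ℓ ε x i j ^ (q/2) * Fij ℓ ε x i j ^ (q/2) := by
    rw [← Real.rpow_add hF]; norm_num
  have hrpow0 : (0:ℝ) < ℓ ^ (K - 1 - ε) := Real.rpow_pos_of_pos hℓ _
  by_cases hcase : ‖z - x k‖ ≤ K * ℓ * |Real.log ℓ|
  · have hθz : θ (‖z - x k‖ / (K * ℓ * |Real.log ℓ|)) = 1 :=
      hθ1 _ ((div_le_one (by positivity)).2 hcase)
    rw [hθz]
    have h2 : q * (ℓ ^ ε)⁻¹ * hcut ℓ (x k - z) * Fij ℓ ε x i j ^ (q/2) ≤ 2 := by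
      set t := q * hcut ℓ (x k - z) / (2 * ℓ ^ ε) with ht
      have ht0 : 0 ≤ t := by positivity
      have hFt : Fij ℓ ε x i j ^ (q/2) ≤ Real.exp (-t) := by
        rw [Fij, ← Real.exp_mul]
        apply Real.exp_le_exp.2
        have e : -(NNij ℓ x i j) / ℓ ^ ε * (q/2) = -(q * NNij ℓ x i j / (2 * ℓ ^ ε)) := by
          ring
        rw [e, ht]
        exact neg_le_neg (by gcongr)
      have h1 : t * Real.exp (-t) ≤ 1 := by
        have ha : t ≤ Real.exp t := by nlinarith [Real.add_one_le_exp t]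
        calc t * Real.exp (-t) ≤ Real.exp t * Real.exp (-t) :=
              mul_le_mul_of_nonneg_right ha (Real.exp_pos _).le
          _ = 1 := by rw [← Real.exp_add]; simp
      calc q * (ℓ ^ ε)⁻¹ * hcut ℓ (x k - z) * Fij ℓ ε x i j ^ (q/2)
          = 2 * (t * Fij ℓ ε x i j ^ (q/2)) := by rw [ht]; field_simp
        _ ≤ 2 * (t * Real.exp (-t)) := by gcongr
        _ ≤ 2 * 1 := by gcongr
        _ = 2 := by norm_num
    calc Fij ℓ ε x i j ^ q * q * (ℓ ^ ε)⁻¹ * hcut ℓ (x k - z) * ℓ⁻¹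
        = (q * (ℓ ^ ε)⁻¹ * hcut ℓ (x k - z) * Fij ℓ ε x i j ^ (q/2)) *
            (Fij ℓ ε x i j ^ (q/2) * ℓ⁻¹) := by rw [hsplit]; ring
      _ ≤ 2 * (Fij ℓ ε x i j ^ (q/2) * ℓ⁻¹) :=
          mul_le_mul_of_nonneg_right h2 (by positivity)
      _ = 2 * ℓ⁻¹ * 1 * Fij ℓ ε x i j ^ (q/2) := by ring
      _ ≤ 2 * ℓ⁻¹ * 1 * Fij ℓ ε x i j ^ (q/2) + q * ℓ ^ (K - 1 - ε) :=
          le_add_of_nonneg_right (by positivity)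
  · push_neg at hcase
    have hnormrev : ‖x k - z‖ = ‖z - x k‖ := norm_sub_rev _ _
    have hhb : hcut ℓ (x k - z) ≤ ℓ ^ K := by
      rw [hcut, Real.rpow_def_of_pos hℓ]
      apply Real.exp_le_exp.2
      have h1 : K * |Real.log ℓ| ≤ ‖x k - z‖ / ℓ := by
        rw [le_div_iff₀ hℓ, hnormrev]
        nlinarith [hcase]
      have h2 : ‖x k - z‖ ≤ Real.sqrt (‖x k - z‖ ^ 2 + ℓ ^ 2) := norm_le_sqrt hℓ _
      have h3 : ‖x k - z‖ / ℓ ≤ Real.sqrt (‖x k - z‖ ^ 2 + ℓ ^ 2) / ℓ := by gcongr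
      have habs : |Real.log ℓ| = -Real.log ℓ := abs_of_neg hlogneg
      rw [habs] at h1
      have h4 : K * -Real.log ℓ ≤ Real.sqrt (‖x k - z‖ ^ 2 + ℓ ^ 2) / ℓ := le_trans h1 h3
      rw [le_div_iff₀ hℓ] at h4
      rw [div_le_iff₀ hℓ]
      nlinarith [h4]
    have hFq1 : Fij ℓ ε x i j ^ q ≤ 1 := Real.rpow_le_one hF.le hFle hq.le
    have hFq0 : 0 ≤ Fij ℓ ε x i j ^ q := Real.rpow_nonneg hF.le _
    have hrw : ℓ ^ (K - 1 - ε) = ℓ ^ K * ℓ⁻¹ * (ℓ ^ ε)⁻¹ := by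
      rw [show K - 1 - ε = K + (-1) + (-ε) by ring, Real.rpow_add hℓ, Real.rpow_add hℓ,
        Real.rpow_neg_one, Real.rpow_neg hℓ.le]
    have hstep : Fij ℓ ε x i j ^ q * q * (ℓ ^ ε)⁻¹ * hcut ℓ (x k - z) * ℓ⁻¹ ≤
        1 * q * (ℓ ^ ε)⁻¹ * (ℓ ^ K) * ℓ⁻¹ := by gcongr
    have hθ0 := (hθ01 (‖z - x k‖ / (K * ℓ * |Real.log ℓ|))).1
    have hterm : (0:ℝ) ≤ 2 * ℓ⁻¹ * θ (‖z - x k‖ / (K * ℓ * |Real.log ℓ|)) *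
        Fij ℓ ε x i j ^ (q/2) :=
      mul_nonneg (mul_nonneg (mul_nonneg (by norm_num) (inv_nonneg.2 hℓ.le)) hθ0) hFh0
    have heq : 1 * q * (ℓ ^ ε)⁻¹ * (ℓ ^ K) * ℓ⁻¹ = q * ℓ ^ (K - 1 - ε) := by
      rw [hrw]; ring
    linarith [hstep, heq ▸ hstep]


/- STATEMENT 8: localized derivative bound (Lemma B.2 / `lm:nablaF`,
eq. (B.4) with α = 1).  With θ a smooth cutoff (θ = 1 on (−∞,1], θ = 0 on
[2,∞), values in [0,1]) and θ_{ab} = θ(|x_a−x_b|/(Kℓ|log ℓ|)): for every q > 0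
there is c_q > 0 (depending only on q), and for every K > 0 there is C > 0
(depending only on q and K) such that for every ℓ ∈ (0,1/2), N ≥ 3, every
configuration, all i ≠ j and every k ∉ {i,j}:
  |∇_{x_k} F_{ij}^q| ≤ c_q ℓ⁻¹ (θ_{ik} + θ_{jk}) F_{ij}^{q/2} + C ℓ^{K−1−ε}. -/
theorem gradient_theta_bound (q : ℝ) (hq : 0 < q) :
    ∃ c : ℝ, 0 < c ∧
      ∀ (K : ℝ), 0 < K →
      ∃ C : ℝ, 0 < C ∧
        ∀ (ε : ℝ), 0 < ε → ε < 1/10 →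
        ∀ (θ : ℝ → ℝ), ContDiff ℝ (⊤ : ℕ∞) θ → (∀ s, θ s ∈ Set.Icc (0:ℝ) 1) →
          (∀ s, s ≤ 1 → θ s = 1) → (∀ s, 2 ≤ s → θ s = 0) →
        ∀ (ℓ : ℝ), 0 < ℓ → ℓ < 1/2 →
        ∀ (N : ℕ), 3 ≤ N →
        ∀ (x : Fin N → E3) (i j k : Fin N), i ≠ j → k ≠ i → k ≠ j →
          gradk (fun y => Fij ℓ ε y i j ^ q) k x ≤
            c * ℓ⁻¹ * (θ (‖x i - x k‖ / (K * ℓ * |Real.log ℓ|))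
                + θ (‖x j - x k‖ / (K * ℓ * |Real.log ℓ|))) * Fij ℓ ε x i j ^ (q/2)
              + C * ℓ ^ (K - 1 - ε) := by
  refine ⟨2, by norm_num, fun K hK => ⟨2*q, by positivity, ?_⟩⟩
  intro ε hε hε10 θ hθsmooth hθ01 hθ1 hθ2 ℓ hℓ hℓ2 N hN x i j k hij hki hkj
  have hkmem : k ∈ Finset.univ.filter (fun m => m ≠ i ∧ m ≠ j) := by simp [hki, hkj]
  have hsum := Finset.single_le_sum
    (f := fun m => hcut ℓ (x m - x i) + hcut ℓ (x m - x j))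
    (fun m _ => add_nonneg (Real.exp_pos _).le (Real.exp_pos _).le) hkmem
  have hNNi : hcut ℓ (x k - x i) ≤ NNij ℓ x i j :=
    le_trans (le_add_of_nonneg_right (Real.exp_pos _).le) hsum
  have hNNj : hcut ℓ (x k - x j) ≤ NNij ℓ x i j :=
    le_trans (le_add_of_nonneg_left (Real.exp_pos _).le) hsum
  have main := gradk_le_main (ε := ε) x i j k hℓ hq.le hki hkj
  have k1 := key_est (ε := ε) x i j k hq hK hε hℓ hℓ2 θ hθ01 hθ1 (x i) hNNi
  have k2 := key_est (ε := ε) x i j k hq hK hε hℓ hℓ2 θ hθ01 hθ1 (x j) hNNj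
  have htot := le_trans main (add_le_add k1 k2)
  linarith [htot]
end
end

section
/- There exist universal constants C₀ > 0 and C₁ > 0 with the following property. Let 0 < a < R and L ≥ C₀ R. Then among all positive real numbers k with k(L−a) < π/2 satisfying the equation kL = tan(k(L−a)) there is a smallest one, and this smallest positive solution k satisfies (3a/L³)(1 − C₁R/L) ≤ k² ≤ (3a/L³)(1 + C₁R/L). -/
open Real Set

/-! With `b = L - a` and `x = k b` the equation reads `tan x = (1 + a / b) x`. Since `tan x / x`
is strictly increasing on `(0, π / 2)`, it has at most one root there, so the smallest root is the
only one. The intermediate value theorem puts it in `[√(a / b), 2 √(a / b)]`, and the bounds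
`x³ / 3 (1 - x²) ≤ tan x - x ≤ x³ / 3 (1 + x²)` then pin `k²` between `3a / (b² (b + 4a))` and
`3a / (b² (b - 4a))`, both of which are `3a / L³ (1 + O(R / L))`. -/

namespace Real

lemma sin_sub_mul_cos_le {x : ℝ} (hx : 0 ≤ x) : sin x - x * cos x ≤ x ^ 3 / 3 := by
  have hmono : MonotoneOn (fun y ↦ y ^ 3 / 3 - (sin y - y * cos y)) (Ici 0) := by
    refine monotoneOn_of_hasDerivWithinAt_nonneg (convex_Ici 0) (by fun_prop)
      (f' := fun y ↦ y * (y - sin y)) (fun y _ ↦ HasDerivAt.hasDerivWithinAt ?_) ?_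
    · refine (((hasDerivAt_pow 3 y).div_const 3).sub
        ((hasDerivAt_sin y).sub ((hasDerivAt_id' y).mul (hasDerivAt_cos y)))).congr_deriv ?_
      push_cast; ring
    · intro y hy
      rw [interior_Ici, mem_Ioi] at hy
      exact mul_nonneg hy.le (sub_nonneg.2 (sin_le hy.le))
  simpa using hmono self_mem_Ici hx hx

lemma cube_div_three_sub_le_sin_sub_mul_cos {x : ℝ} (hx : 0 ≤ x) :
    x ^ 3 / 3 - x ^ 5 / 20 ≤ sin x - x * cos x := by
  have hmono : MonotoneOn (fun y ↦ sin y - y * cos y - (y ^ 3 / 3 - y ^ 5 / 20)) (Ici 0) := by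
    refine monotoneOn_of_hasDerivWithinAt_nonneg (convex_Ici 0) (by fun_prop)
      (f' := fun y ↦ y * sin y - y ^ 2 + y ^ 4 / 4) (fun y _ ↦ HasDerivAt.hasDerivWithinAt ?_) ?_
    · refine (((hasDerivAt_sin y).sub ((hasDerivAt_id' y).mul (hasDerivAt_cos y))).sub
        (((hasDerivAt_pow 3 y).div_const 3).sub
          ((hasDerivAt_pow 5 y).div_const 20))).congr_deriv ?_
      push_cast; ring
    · intro y hy
      rw [interior_Ici, mem_Ioi] at hy
      -- `x - x³/6 < sin x` makes the derivative at least `x⁴/12`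
      nlinarith [mul_lt_mul_of_pos_left (sin_gt_sub_cube hy) hy, pow_pos hy 4]
  simpa using hmono self_mem_Ici hx hx

lemma tan_sub_self_eq {x : ℝ} (hx : cos x ≠ 0) :
    tan x - x = (sin x - x * cos x) / cos x := by
  rw [tan_eq_sin_div_cos]; field_simp

lemma cos_pos_of_nonneg_of_le_one {x : ℝ} (hx : 0 ≤ x) (hx1 : x ≤ 1) : 0 < cos x :=
  cos_pos_of_mem_Ioo ⟨by linarith [pi_pos], by linarith [pi_gt_three]⟩

lemma tan_sub_self_le {x : ℝ} (hx : 0 ≤ x) (hx1 : x ≤ 1) :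
    tan x - x ≤ x ^ 3 / 3 * (1 + x ^ 2) := by
  have hcos := cos_pos_of_nonneg_of_le_one hx hx1
  rw [tan_sub_self_eq hcos.ne', div_le_iff₀ hcos]
  have : 1 ≤ (1 + x ^ 2) * cos x := by
    nlinarith [mul_le_mul_of_nonneg_left (one_sub_sq_div_two_le_cos (x := x))
      (by positivity : 0 ≤ 1 + x ^ 2), mul_nonneg (sq_nonneg x) (by nlinarith : 0 ≤ 1 - x ^ 2)]
  nlinarith [sin_sub_mul_cos_le hx, mul_le_mul_of_nonneg_left this (by positivity : 0 ≤ x ^ 3 / 3)]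

lemma le_tan_sub_self {x : ℝ} (hx : 0 ≤ x) (hx1 : x ≤ 1) :
    x ^ 3 / 3 * (1 - x ^ 2) ≤ tan x - x := by
  have hcos := cos_pos_of_nonneg_of_le_one hx hx1
  rw [tan_sub_self_eq hcos.ne', le_div_iff₀ hcos]
  have : (1 - x ^ 2) * cos x ≤ 1 - 3 * x ^ 2 / 20 := by
    nlinarith [mul_le_mul_of_nonneg_left (cos_le_one x) (by nlinarith : 0 ≤ 1 - x ^ 2)]
  nlinarith [cube_div_three_sub_le_sin_sub_mul_cos hx,
    mul_le_mul_of_nonneg_left this (by positivity : 0 ≤ x ^ 3 / 3)]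

lemma strictMonoOn_tan_div_self : StrictMonoOn (fun x ↦ tan x / x) (Ioo 0 (π / 2)) := by
  refine strictMonoOn_of_hasDerivWithinAt_pos (convex_Ioo 0 (π / 2))
    (f' := fun x ↦ (x - sin x * cos x) / (x ^ 2 * cos x ^ 2)) ?_ (fun x hx ↦ ?_) (fun x hx ↦ ?_)
  · exact (continuousOn_tan_Ioo.mono (Ioo_subset_Ioo (by linarith [pi_pos]) le_rfl)).div
      continuousOn_id fun x hx ↦ hx.1.ne'
  all_goals
    rw [interior_Ioo] at hx
    have hcos : 0 < cos x := cos_pos_of_mem_Ioo ⟨by linarith [hx.1, pi_pos], hx.2⟩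
  · refine HasDerivAt.hasDerivWithinAt ?_
    refine ((hasDerivAt_tan hcos.ne').div (hasDerivAt_id x) hx.1.ne').congr_deriv ?_
    rw [tan_eq_sin_div_cos]; field_simp; simp
  · -- `sin x cos x = sin (2x) / 2 < x`
    have := sin_lt (mul_pos two_pos hx.1)
    rw [sin_two_mul] at this
    exact div_pos (by linarith) (mul_pos (pow_pos hx.1 2) (pow_pos hcos 2))

lemma eq_of_tan_eq_mul_self {c x y : ℝ} (hx : x ∈ Ioo 0 (π / 2)) (hy : y ∈ Ioo 0 (π / 2))
    (hcx : tan x = c * x) (hcy : tan y = c * y) : x = y :=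
  strictMonoOn_tan_div_self.injOn hx hy <| by
    simp only [hcx, hcy, mul_div_cancel_right₀ _ hx.1.ne', mul_div_cancel_right₀ _ hy.1.ne']

lemma exists_tan_eq_one_add_mul_self {ε : ℝ} (hε : 0 < ε) (hε' : ε ≤ 1 / 16) :
    ∃ x, 0 < x ∧ x ^ 2 ≤ 4 * ε ∧ tan x = (1 + ε) * x := by
  set s := √ε
  have hs : 0 < s := sqrt_pos.2 hε
  have hs2 : s ^ 2 = ε := sq_sqrt hε.le
  have hs4 : s ≤ 1 / 4 := by nlinarith
  have hcont : ContinuousOn (fun x ↦ tan x - (1 + ε) * x) (Icc s (2 * s)) :=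
    (continuousOn_tan_Ioo.mono fun x hx ↦
      ⟨by linarith [hx.1, pi_pos], by linarith [hx.2, pi_gt_three]⟩).sub (by fun_prop)
  have hleft : tan s - (1 + ε) * s ≤ 0 := by
    nlinarith [tan_sub_self_le hs.le (by linarith), pow_pos hs 3]
  have hright : 0 ≤ tan (2 * s) - (1 + ε) * (2 * s) := by
    nlinarith [le_tan_sub_self (by linarith : 0 ≤ 2 * s) (by linarith), pow_pos hs 3]
  obtain ⟨x, hx, hroot⟩ := intermediate_value_Icc (by linarith) hcont ⟨hleft, hright⟩
  refine ⟨x, hs.trans_le hx.1, ?_, by linarith [show tan x - (1 + ε) * x = 0 from hroot]⟩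
  nlinarith [hx.1, hx.2]

lemma sq_bounds_of_tan_eq {ε x : ℝ} (hx : 0 < x) (hx1 : x ≤ 1) (h : tan x = (1 + ε) * x) :
    x ^ 2 * (1 - x ^ 2) ≤ 3 * ε ∧ 3 * ε ≤ x ^ 2 * (1 + x ^ 2) := by
  have hε : tan x - x = x / 3 * (3 * ε) := by rw [h]; ring
  constructor
  · refine le_of_mul_le_mul_left ?_ (by positivity : 0 < x / 3)
    linarith [le_tan_sub_self hx.le hx1]
  · refine le_of_mul_le_mul_left ?_ (by positivity : 0 < x / 3)
    linarith [tan_sub_self_le hx.le hx1]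

end Real

lemma pow_four_le_sub_sq_mul_sub_mul_add {a R L : ℝ} (ha : 0 ≤ a) (haR : a ≤ R)
    (hL : 40 * R ≤ L) : L ^ 4 ≤ (L - a) ^ 2 * (L - 5 * a) * (L + 10 * R) := by
  have hR : 0 ≤ R := ha.trans haR
  calc L ^ 4 ≤ (L - R) ^ 2 * (L - 5 * R) * (L + 10 * R) := by
        nlinarith [mul_le_mul_of_nonneg_left hL (by positivity : 0 ≤ R * L ^ 2),
          mul_le_mul_of_nonneg_left hL (by positivity : 0 ≤ R ^ 3), sq_nonneg (R * L),
          pow_nonneg hR 4]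
    _ ≤ (L - a) ^ 2 * (L - 5 * a) * (L + 10 * R) := by
        gcongr ?_ ^ 2 * ?_ * _
        all_goals linarith

lemma sub_sq_mul_add_mul_sub_le_pow_four {a R L : ℝ} (ha : 0 ≤ a) (haR : a ≤ R)
    (hL : 40 * R ≤ L) : (L - a) ^ 2 * (L + 3 * a) * (L - 10 * R) ≤ L ^ 4 := by
  have hsq : (L - a) ^ 2 ≤ L ^ 2 := by gcongr <;> linarith
  have hprod : (L + 3 * a) * (L - 10 * R) ≤ L ^ 2 := by nlinarith
  calc (L - a) ^ 2 * (L + 3 * a) * (L - 10 * R)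
        = (L - a) ^ 2 * ((L + 3 * a) * (L - 10 * R)) := by ring
    _ ≤ L ^ 2 * L ^ 2 := mul_le_mul hsq hprod (by nlinarith) (sq_nonneg L)
    _ = L ^ 4 := by ring

lemma three_mul_div_cube_mul_one_sub_le {a R L s : ℝ} (ha : 0 < a) (haR : a < R)
    (hL : 40 * R ≤ L) (hs : 0 ≤ s) (h : 3 * a ≤ s * ((L - a) ^ 2 * (L + 3 * a))) :
    3 * a / L ^ 3 * (1 - 10 * R / L) ≤ s := by
  have hL0 : 0 < L := by linarith
  rw [show 3 * a / L ^ 3 * (1 - 10 * R / L) = 3 * a * (L - 10 * R) / L ^ 4 by field_simp,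
    div_le_iff₀ (by positivity)]
  calc 3 * a * (L - 10 * R) ≤ s * ((L - a) ^ 2 * (L + 3 * a)) * (L - 10 * R) :=
        mul_le_mul_of_nonneg_right h (by linarith)
    _ = s * ((L - a) ^ 2 * (L + 3 * a) * (L - 10 * R)) := by ring
    _ ≤ s * L ^ 4 :=
        mul_le_mul_of_nonneg_left (sub_sq_mul_add_mul_sub_le_pow_four ha.le haR.le hL) hs

lemma le_three_mul_div_cube_mul_one_add {a R L s : ℝ} (ha : 0 < a) (haR : a < R)
    (hL : 40 * R ≤ L) (hs : 0 ≤ s) (h : s * ((L - a) ^ 2 * (L - 5 * a)) ≤ 3 * a) :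
    s ≤ 3 * a / L ^ 3 * (1 + 10 * R / L) := by
  have hL0 : 0 < L := by linarith
  rw [show 3 * a / L ^ 3 * (1 + 10 * R / L) = 3 * a * (L + 10 * R) / L ^ 4 by field_simp,
    le_div_iff₀ (by positivity)]
  calc s * L ^ 4 ≤ s * ((L - a) ^ 2 * (L - 5 * a) * (L + 10 * R)) :=
        mul_le_mul_of_nonneg_left (pow_four_le_sub_sq_mul_sub_mul_add ha.le haR.le hL) hs
    _ = s * ((L - a) ^ 2 * (L - 5 * a)) * (L + 10 * R) := by ring
    _ ≤ 3 * a * (L + 10 * R) := mul_le_mul_of_nonneg_right h (by linarith)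

theorem smallest_tan_root_asymptotics :
    ∃ C₀ C₁ : ℝ, 0 < C₀ ∧ 0 < C₁ ∧
      ∀ a R L : ℝ, 0 < a → a < R → C₀ * R ≤ L →
        ∃ k : ℝ,
          IsLeast {k : ℝ | 0 < k ∧ k * (L - a) < Real.pi / 2 ∧
              k * L = Real.tan (k * (L - a))} k ∧
          3 * a / L ^ 3 * (1 - C₁ * R / L) ≤ k ^ 2 ∧
          k ^ 2 ≤ 3 * a / L ^ 3 * (1 + C₁ * R / L) := by
  refine ⟨40, 10, by norm_num, by norm_num, fun a R L ha haR hL ↦ ?_⟩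
  have hb0 : 0 < L - a := by linarith
  set ε := a / (L - a) with hε
  have hε39 : 39 * ε < 1 := by rw [hε, mul_div_assoc', div_lt_one hb0]; linarith
  have hscale : ∀ k, k * L = (1 + ε) * (k * (L - a)) := fun k ↦ by rw [hε]; field_simp; ring
  have ha_eq : 3 * a = 3 * ε * (L - a) := by rw [hε]; field_simp
  obtain ⟨x, hx0, hx4, hroot⟩ :=
    exists_tan_eq_one_add_mul_self (ε := ε) (by positivity) (by linarith)
  have hx1 : x < 1 / 2 := by nlinarith
  have hxπ : x < π / 2 := by linarith [pi_gt_three]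
  obtain ⟨hlow, hup⟩ := sq_bounds_of_tan_eq hx0 (by linarith) hroot
  have hk : x / (L - a) * (L - a) = x := div_mul_cancel₀ x hb0.ne'
  refine ⟨x / (L - a), ⟨⟨by positivity, by rwa [hk], by rw [hscale, hk, hroot]⟩, ?_⟩, ?_, ?_⟩
  · rintro k ⟨hk0, hkπ, hkL⟩
    rw [hscale] at hkL
    rw [← eq_of_tan_eq_mul_self ⟨mul_pos hk0 hb0, hkπ⟩ ⟨hx0, hxπ⟩ hkL.symm hroot,
      mul_div_cancel_right₀ _ hb0.ne']
  · refine three_mul_div_cube_mul_one_sub_le ha haR hL (sq_nonneg _) ?_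
    rw [show (x / (L - a)) ^ 2 * ((L - a) ^ 2 * (L + 3 * a)) = x ^ 2 * (1 + 4 * ε) * (L - a) by
      rw [hε]; field_simp; ring, ha_eq]
    exact mul_le_mul_of_nonneg_right (by nlinarith) hb0.le
  · refine le_three_mul_div_cube_mul_one_add ha haR hL (sq_nonneg _) ?_
    rw [show (x / (L - a)) ^ 2 * ((L - a) ^ 2 * (L - 5 * a)) = x ^ 2 * (1 - 4 * ε) * (L - a) by
      rw [hε]; field_simp; ring, ha_eq]
    exact mul_le_mul_of_nonneg_right (by nlinarith) hb0.le
end
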